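/- arXiv:2304.02689 — 2 statements merged into one kernel-verified Lean document; each statement's English description precedes it below -/
import Mathlib

section
/- The softmax probability of the maximizing index, u_{n*}(τ) = exp(s_{n*}/τ)/∑_m exp(s_m/τ) where s_{n*} = max_m s_m, is monotonically non-increasing in τ > 0. -/
open Finset Real Set

/- Dividing by the largest weight, u_{n*}(τ) = (∑ₘ exp(-(s_{n*} - sₘ)/τ))⁻¹. Each gap
s_{n*} - sₘ is nonnegative, so each summand grows with τ, and hence so does the sum. -/

theorem Real.monotoneOn_exp_div_of_nonpos {c : ℝ} (hc : c ≤ 0) :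
    MonotoneOn (fun τ : ℝ => exp (c / τ)) (Ioi 0) := by
  intro a ha b _ hab
  have h := div_le_div_of_nonneg_left (neg_nonneg.mpr hc) ha hab
  rw [neg_div, neg_div, neg_le_neg_iff] at h
  exact exp_le_exp.mpr h

theorem exp_div_div_sum_exp_eq_inv_sum {ι : Type*} [Fintype ι] (s : ι → ℝ) (a τ : ℝ) :
    exp (a / τ) / ∑ m, exp (s m / τ) = (∑ m, exp ((s m - a) / τ))⁻¹ := by
  simp only [sub_div, exp_sub, ← Finset.sum_div, inv_div]

theorem softmax_max_prob_antitone_in_temperature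
    {N : ℕ} (s : Fin N → ℝ) (nstar : Fin N) (hmax : ∀ m, s m ≤ s nstar) :
    AntitoneOn (fun τ : ℝ => Real.exp (s nstar / τ) / ∑ m, Real.exp (s m / τ))
      (Set.Ioi 0) := by
  intro a ha b hb hab
  simp only [exp_div_div_sum_exp_eq_inv_sum]
  have hsum_pos : 0 < ∑ m, exp ((s m - s nstar) / a) :=
    sum_pos (fun m _ => exp_pos _) ⟨nstar, mem_univ _⟩
  refine inv_anti₀ hsum_pos (sum_le_sum fun m _ => ?_)
  exact monotoneOn_exp_div_of_nonpos (sub_nonpos.mpr (hmax m)) ha hb hab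
end

section
/- The uniformity loss L_unif({ψ_c}) = ∑_c log ∑_{c'} exp(ψ_c·ψ_{c'}/τ) over K unit vectors (so all self-terms ψ_c·ψ_c = 1) satisfies L_unif ≥ K · log( (K-1) · exp( (∑_{c≠c'} ψ_c·ψ_{c'}) / (τ K (K-1)) ) + e^{1/τ} ); in particular, using ∑_{c≠c'} ψ_c·ψ_{c'} ≥ -K, one gets L_unif ≥ K · log( e^{1/τ} + (K-1) e^{-1/(τ(K-1))} ). -/
open scoped RealInnerProductSpace

private lemma convexOn_log_add_exp (a b : ℝ) (ha : 0 < a) (hb : 0 < b) :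
    ConvexOn ℝ Set.univ (fun t : ℝ => Real.log (b * Real.exp t + a)) := by
  have hden : ∀ t : ℝ, 0 < b * Real.exp t + a := fun t => by positivity
  have hd1 : ∀ t : ℝ, HasDerivAt (fun t : ℝ => b * Real.exp t + a)
      (b * Real.exp t) t := by
    intro t
    simpa using ((Real.hasDerivAt_exp t).const_mul b).add_const a
  have hg : ∀ t : ℝ, HasDerivAt (fun t : ℝ => Real.log (b * Real.exp t + a))
      (b * Real.exp t / (b * Real.exp t + a)) t := fun t =>
    (hd1 t).log (ne_of_gt (hden t))
  have hderiv : deriv (fun t : ℝ => Real.log (b * Real.exp t + a)) =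
      fun t => b * Real.exp t / (b * Real.exp t + a) := by
    funext t; exact (hg t).deriv
  have hg2 : ∀ t : ℝ, HasDerivAt (fun t => b * Real.exp t / (b * Real.exp t + a))
      ((b * Real.exp t * (b * Real.exp t + a) - b * Real.exp t * (b * Real.exp t))
        / (b * Real.exp t + a) ^ 2) t := by
    intro t
    exact ((Real.hasDerivAt_exp t).const_mul b).div (hd1 t) (ne_of_gt (hden t))
  apply convexOn_univ_of_deriv2_nonneg
  · exact fun t => (hg t).differentiableAt
  · intro t
    rw [hderiv]
    exact (hg2 t).differentiableAt
  · intro t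
    simp only [Function.iterate_succ_apply', Function.iterate_zero_apply, Function.id_def]
    rw [hderiv, (hg2 t).deriv]
    have : b * Real.exp t * (b * Real.exp t + a) - b * Real.exp t * (b * Real.exp t)
        = b * Real.exp t * a := by ring
    rw [this]
    positivity

private lemma sum_offDiag_eq {K : ℕ} (f : Fin K → Fin K → ℝ) :
    ∑ p ∈ Finset.univ.offDiag, f p.1 p.2
      = ∑ c : Fin K, ∑ c' ∈ Finset.univ.erase c, f c c' := by
  classical
  have h1 : ∑ p ∈ (Finset.univ ×ˢ Finset.univ : Finset (Fin K × Fin K)), f p.1 p.2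
      = ∑ c : Fin K, ∑ c' : Fin K, f c c' := Finset.sum_product _ _ _
  have h2 : (Finset.univ : Finset (Fin K)).diag ∪ Finset.univ.offDiag
      = Finset.univ ×ˢ Finset.univ := Finset.diag_union_offDiag _
  have h3 := Finset.sum_union (f := fun p : Fin K × Fin K => f p.1 p.2)
    (Finset.disjoint_diag_offDiag (Finset.univ : Finset (Fin K)))
  rw [h2, h1] at h3
  have h4 : ∑ p ∈ (Finset.univ : Finset (Fin K)).diag, f p.1 p.2
      = ∑ c : Fin K, f c c := Finset.sum_diag _ _
  have h5 : ∀ c : Fin K, ∑ c' : Fin K, f c c'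
      = f c c + ∑ c' ∈ Finset.univ.erase c, f c c' := fun c =>
    (Finset.add_sum_erase _ _ (Finset.mem_univ c)).symm
  have := h3
  rw [h4] at this
  have : ∑ c : Fin K, f c c + ∑ p ∈ Finset.univ.offDiag, f p.1 p.2
      = ∑ c : Fin K, (f c c + ∑ c' ∈ Finset.univ.erase c, f c c') := by
    rw [← this, Finset.sum_congr rfl fun c _ => h5 c]
  rw [Finset.sum_add_distrib] at this
  linarith

theorem uniformity_loss_lower_bound
    {d K : ℕ} (hK : 2 ≤ K) (ψ : Fin K → EuclideanSpace ℝ (Fin d))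
    (hunit : ∀ c, ‖ψ c‖ = 1) (τ : ℝ) (hτ : 0 < τ) :
    (∑ c, Real.log (∑ c', Real.exp (⟪ψ c, ψ c'⟫ / τ)))
        ≥ K * Real.log ((K - 1) *
            Real.exp ((∑ p ∈ Finset.univ.offDiag, ⟪ψ p.1, ψ p.2⟫) / (τ * K * (K - 1)))
            + Real.exp (1 / τ)) ∧
    (∑ c, Real.log (∑ c', Real.exp (⟪ψ c, ψ c'⟫ / τ)))
        ≥ K * Real.log (Real.exp (1 / τ)
            + (K - 1) * Real.exp (-1 / (τ * (K - 1)))) := by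
  classical
  have hK1 : (1 : ℝ) < (K : ℝ) := by
    have : (2 : ℝ) ≤ (K : ℝ) := by exact_mod_cast hK
    linarith
  have hKm1 : (0 : ℝ) < (K : ℝ) - 1 := by linarith
  have hK0 : (0 : ℝ) < (K : ℝ) := by linarith
  have hself : ∀ c, ⟪ψ c, ψ c⟫ = 1 := fun c => by
    rw [real_inner_self_eq_norm_sq, hunit c, one_pow]
  set S : ℝ := ∑ p ∈ Finset.univ.offDiag, ⟪ψ p.1, ψ p.2⟫ with hSdef
  set sc : Fin K → ℝ := fun c => ∑ c' ∈ Finset.univ.erase c, ⟪ψ c, ψ c'⟫ with hscdef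
  have hS : S = ∑ c, sc c := sum_offDiag_eq (fun c c' => ⟪ψ c, ψ c'⟫)
  have hcard : ∀ c : Fin K, ((Finset.univ.erase c).card : ℝ) = (K : ℝ) - 1 := by
    intro c
    rw [Finset.card_erase_of_mem (Finset.mem_univ c), Finset.card_univ, Fintype.card_fin]
    have h1 : 1 ≤ K := by omega
    push_cast [h1]
    ring
  have key1 : ∀ x : ℝ, ((K : ℝ) - 1)⁻¹ * (x / τ) = x / (τ * ((K : ℝ) - 1)) := by
    intro x
    field_simp
  have key2 : ∀ x : ℝ, ((K : ℝ))⁻¹ * (x / (τ * ((K : ℝ) - 1)))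
      = x / (τ * (K : ℝ) * ((K : ℝ) - 1)) := by
    intro x
    field_simp
  -- Step A: Jensen for exp on the off-diagonal terms of row c
  have stepA : ∀ c : Fin K, ((K : ℝ) - 1) * Real.exp (sc c / (τ * ((K : ℝ) - 1)))
      ≤ ∑ c' ∈ Finset.univ.erase c, Real.exp (⟪ψ c, ψ c'⟫ / τ) := by
    intro c
    have hw : ∑ _c' ∈ Finset.univ.erase c, ((K : ℝ) - 1)⁻¹ = 1 := by
      rw [Finset.sum_const, nsmul_eq_mul, hcard c]
      field_simp
    have hj := convexOn_exp.map_sum_le (t := Finset.univ.erase c)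
      (w := fun _ => ((K : ℝ) - 1)⁻¹) (p := fun c' => ⟪ψ c, ψ c'⟫ / τ)
      (fun _ _ => by positivity) hw (fun _ _ => Set.mem_univ _)
    simp only [smul_eq_mul] at hj
    have h1 : ∑ c' ∈ Finset.univ.erase c, ((K : ℝ) - 1)⁻¹ * (⟪ψ c, ψ c'⟫ / τ)
        = sc c / (τ * ((K : ℝ) - 1)) := by
      rw [← Finset.mul_sum, ← Finset.sum_div, key1]
    rw [h1, ← Finset.mul_sum] at hj
    calc ((K : ℝ) - 1) * Real.exp (sc c / (τ * ((K : ℝ) - 1)))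
        ≤ ((K : ℝ) - 1) * (((K : ℝ) - 1)⁻¹
            * ∑ c' ∈ Finset.univ.erase c, Real.exp (⟪ψ c, ψ c'⟫ / τ)) := by
          apply mul_le_mul_of_nonneg_left hj (le_of_lt hKm1)
      _ = ∑ c' ∈ Finset.univ.erase c, Real.exp (⟪ψ c, ψ c'⟫ / τ) := by
          field_simp
  -- Step B: rows lower bound
  have stepB : ∀ c : Fin K,
      Real.log (((K : ℝ) - 1) * Real.exp (sc c / (τ * ((K : ℝ) - 1))) + Real.exp (1 / τ))
        ≤ Real.log (∑ c', Real.exp (⟪ψ c, ψ c'⟫ / τ)) := by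
    intro c
    apply Real.log_le_log (by positivity)
    rw [← Finset.add_sum_erase _ _ (Finset.mem_univ c), hself c]
    have := stepA c
    linarith
  -- Step C: Jensen for h t = log ((K-1) exp t + exp (1/τ))
  have hconv := convexOn_log_add_exp (Real.exp (1 / τ)) ((K : ℝ) - 1)
    (Real.exp_pos _) hKm1
  have hwK : ∑ _c : Fin K, ((K : ℝ))⁻¹ = 1 := by
    rw [Finset.sum_const, nsmul_eq_mul, Finset.card_univ, Fintype.card_fin]
    field_simp
  have hj2 := hconv.map_sum_le (t := Finset.univ)
    (w := fun _ : Fin K => ((K : ℝ))⁻¹) (p := fun c => sc c / (τ * ((K : ℝ) - 1)))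
    (fun _ _ => by positivity) hwK (fun _ _ => Set.mem_univ _)
  simp only [smul_eq_mul] at hj2
  have hmean : ∑ c : Fin K, ((K : ℝ))⁻¹ * (sc c / (τ * ((K : ℝ) - 1)))
      = S / (τ * (K : ℝ) * ((K : ℝ) - 1)) := by
    rw [← Finset.mul_sum, ← Finset.sum_div, ← hS, key2]
  rw [hmean] at hj2
  have first : (∑ c, Real.log (∑ c', Real.exp (⟪ψ c, ψ c'⟫ / τ)))
      ≥ K * Real.log (((K : ℝ) - 1) * Real.exp (S / (τ * (K : ℝ) * ((K : ℝ) - 1)))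
          + Real.exp (1 / τ)) := by
    have h1 : (K : ℝ) * Real.log (((K : ℝ) - 1)
          * Real.exp (S / (τ * (K : ℝ) * ((K : ℝ) - 1))) + Real.exp (1 / τ))
        ≤ (K : ℝ) * ∑ c : Fin K, ((K : ℝ))⁻¹
          * Real.log (((K : ℝ) - 1) * Real.exp (sc c / (τ * ((K : ℝ) - 1)))
            + Real.exp (1 / τ)) :=
      mul_le_mul_of_nonneg_left hj2 (le_of_lt hK0)
    rw [← Finset.mul_sum, ← mul_assoc, mul_inv_cancel₀ (ne_of_gt hK0), one_mul] at h1
    calc (K : ℝ) * Real.log (((K : ℝ) - 1)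
          * Real.exp (S / (τ * (K : ℝ) * ((K : ℝ) - 1))) + Real.exp (1 / τ))
        ≤ ∑ c : Fin K, Real.log (((K : ℝ) - 1)
            * Real.exp (sc c / (τ * ((K : ℝ) - 1))) + Real.exp (1 / τ)) := h1
      _ ≤ ∑ c, Real.log (∑ c', Real.exp (⟪ψ c, ψ c'⟫ / τ)) :=
          Finset.sum_le_sum fun c _ => stepB c
  refine ⟨first, ?_⟩
  -- S ≥ -K
  have hSK : -(K : ℝ) ≤ S := by
    have hnn : (0 : ℝ) ≤ ⟪∑ c, ψ c, ∑ c, ψ c⟫ := real_inner_self_nonneg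
    have hexp : ⟪∑ c, ψ c, ∑ c, ψ c⟫ = (K : ℝ) + S := by
      rw [inner_sum]
      have : ∀ c' : Fin K, ⟪∑ c, ψ c, ψ c'⟫ = ∑ c, ⟪ψ c, ψ c'⟫ := fun c' =>
        sum_inner _ _ _
      rw [Finset.sum_congr rfl fun c' _ => this c']
      have hsym : ∑ c' : Fin K, ∑ c : Fin K, ⟪ψ c, ψ c'⟫
          = ∑ c : Fin K, ∑ c' : Fin K, ⟪ψ c, ψ c'⟫ := Finset.sum_comm
      rw [hsym]
      have : ∀ c : Fin K, ∑ c' : Fin K, ⟪ψ c, ψ c'⟫ = 1 + sc c := by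
        intro c
        rw [← Finset.add_sum_erase _ _ (Finset.mem_univ c), hself c]
      rw [Finset.sum_congr rfl fun c _ => this c, Finset.sum_add_distrib,
        Finset.sum_const, nsmul_eq_mul, Finset.card_univ, Fintype.card_fin, hS]
      ring
    linarith [hexp ▸ hnn]
  -- monotonicity chain
  have hdenpos : (0 : ℝ) < τ * (K : ℝ) * ((K : ℝ) - 1) := by positivity
  have harg : -1 / (τ * ((K : ℝ) - 1)) ≤ S / (τ * (K : ℝ) * ((K : ℝ) - 1)) := by
    have h1 : -(K : ℝ) / (τ * (K : ℝ) * ((K : ℝ) - 1)) = -1 / (τ * ((K : ℝ) - 1)) := by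
      field_simp
    rw [← h1]
    gcongr
  refine le_trans ?_ first
  have hle : Real.exp (1 / τ) + ((K : ℝ) - 1) * Real.exp (-1 / (τ * ((K : ℝ) - 1)))
      ≤ ((K : ℝ) - 1) * Real.exp (S / (τ * (K : ℝ) * ((K : ℝ) - 1))) + Real.exp (1 / τ) := by
    rw [add_comm]
    have := Real.exp_le_exp.mpr harg
    nlinarith [Real.exp_pos (-1 / (τ * ((K : ℝ) - 1)))]
  exact mul_le_mul_of_nonneg_left (Real.log_le_log (by positivity) hle) hK0.le
end
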